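/- Let F : M\γ → N\Σ be the cylindrical cloaking map on M = B₂(0,2)×ℝ ⊂ ℝ³ acting only radially, X(F(X⁻¹(r,θ,z))) = (f₁(r),θ,z) in cylindrical coordinates, with f₁(r) = r/2+1. Let DF_t⁻¹ be the differential of F⁻¹ restricted to the cylinder at distance t from Σ = {r=1}×ℝ. Then with η = ∂_θ and ζ = ∂_z: |η·(DF_t⁻¹ η)| ≤ Ct, ζ·(DF_t⁻¹ ζ) = 1, and ζ·(DF_t⁻¹ η) = η·(DF_t⁻¹ ζ) = 0. Consequently, if Ẽ = (F⁻¹)^*E for a smooth 1-form E, then the angular component of Ẽ satisfies |η·Ẽ| ≤ Ct on the cylinder {r = 1+ct}, while the vertical component ζ·Ẽ converges as t→0 to ζ·E restricted to the axis γ. -/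

import Mathlib

/-! `F⁻¹` keeps the axial part of a point and moves its horizontal part `p` radially,
`p ↦ (h ‖p‖ / ‖p‖) • p` with `h r = 2 (r - 1)`. Its differential is the identity on the axial
direction, and on horizontal vectors orthogonal to `p` (the angular direction `η`) it is
multiplication by the circumference ratio `h ρ / ρ = 2 (ρ - 1) / ρ ≤ 2 (ρ - 1)`, because the
derivative of the radial factor only sees the radial direction. For the vertical component of
the pulled back field, `F⁻¹` is continuous across `ρ = 1` and collapses that cylinder onto the
axis, since `h 1 = 0`. -/


open Filter
open scoped RealInnerProductSpace

local notation "E3" => EuclideanSpace ℝ (Fin 3)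

/-- Cylindrical radius. -/
noncomputable def rho (y : E3) : ℝ := Real.sqrt (y 0 ^ 2 + y 1 ^ 2)

/-- The inverse `F⁻¹` of the cylindrical cloaking map `F` (which acts only radially,
`(r,θ,z) ↦ (r/2+1, θ, z)` in cylindrical coordinates):
`F⁻¹(y) = (2(ρ−1)/ρ · y₁, 2(ρ−1)/ρ · y₂, y₃)` with `ρ = ρ(y)`. -/
noncomputable def Fcylinv (y : E3) : E3 :=
  WithLp.toLp 2 (fun i => if (i : ℕ) < 2 then (2 * (rho y - 1) / rho y) * y i else y i)

/-- The unit angular vector `η = ∂_θ/|∂_θ|` at `y`. -/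
noncomputable def etaVec (y : E3) : E3 :=
  (rho y)⁻¹ • WithLp.toLp 2 (fun i => if i = 0 then -y 1 else if i = 1 then y 0 else 0)

/-- The vertical vector `ζ = ∂_z`. -/
noncomputable def zetaVec : E3 := EuclideanSpace.single 2 (1 : ℝ)

/-- A point at cylindrical radius `1+t`, angle `θ`, height `z`. -/
noncomputable def cylPt (θ z t : ℝ) : E3 :=
  WithLp.toLp 2 (fun i => if i = 0 then (1 + t) * Real.cos θ else if i = 1 then (1 + t) * Real.sin θ else z)

section NormDeriv

variable {E F : Type*} [NormedAddCommGroup E] [NormedSpace ℝ E] [NormedAddCommGroup F]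
  [InnerProductSpace ℝ F]

theorem HasFDerivAt.norm {f : E → F} {f' : E →L[ℝ] F} {y : E} (hf : HasFDerivAt f f' y)
    (h0 : f y ≠ 0) :
    HasFDerivAt (fun x => ‖f x‖) (‖f y‖⁻¹ • (innerSL ℝ (f y)).comp f') y := by
  have hsq := hf.norm_sq.sqrt (by positivity)
  simp only [Real.sqrt_sq (norm_nonneg _)] at hsq
  refine hsq.congr_fderiv ?_
  ext v
  simp only [smul_apply, ContinuousLinearMap.comp_apply, coe_innerSL_apply,
    nsmul_eq_mul, Nat.cast_ofNat, smul_eq_mul]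
  field_simp

end NormDeriv

section RadialMap

variable {E : Type*} [NormedAddCommGroup E] [InnerProductSpace ℝ E] (P : E →L[ℝ] E) (h : ℝ → ℝ)

/-- For `P` the orthogonal projection onto the plane normal to an axis, this is the map
`(r, θ, z) ↦ (h r, θ, z)` in cylindrical coordinates around that axis. -/
noncomputable def radialMap (x : E) : E := x - P x + (h ‖P x‖ / ‖P x‖) • P x

noncomputable def radialMapDeriv (y : E) : E →L[ℝ] E :=
  ContinuousLinearMap.id ℝ E - P + ((h ‖P y‖ / ‖P y‖) • P +
    (deriv (fun r => h r / r) ‖P y‖ • ‖P y‖⁻¹ • (innerSL ℝ (P y)).comp P).smulRight (P y))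

variable {P h}

theorem hasFDerivAt_radialMap {y : E} (hh : DifferentiableAt ℝ h ‖P y‖) (hy : P y ≠ 0) :
    HasFDerivAt (radialMap P h) (radialMapDeriv P h y) y := by
  have hratio : DifferentiableAt ℝ (fun r => h r / r) ‖P y‖ :=
    hh.div differentiableAt_id (norm_ne_zero_iff.mpr hy)
  have hscalar := hratio.hasDerivAt.comp_hasFDerivAt y (P.hasFDerivAt.norm hy)
  exact ((hasFDerivAt_id y).sub P.hasFDerivAt).add (hscalar.smul P.hasFDerivAt)

theorem radialMapDeriv_apply_of_proj_eq_zero (y : E) {v : E} (hv : P v = 0) :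
    radialMapDeriv P h y v = v := by
  simp [radialMapDeriv, hv]

theorem radialMapDeriv_apply_of_inner_eq_zero {y v : E} (hPv : P v = v) (hv : ⟪P y, v⟫ = 0) :
    radialMapDeriv P h y v = (h ‖P y‖ / ‖P y‖) • v := by
  simp [radialMapDeriv, hPv, hv]

end RadialMap

noncomputable def horizontalProj : E3 →L[ℝ] E3 :=
  (EuclideanSpace.proj 0).smulRight (EuclideanSpace.single 0 1) +
  (EuclideanSpace.proj 1).smulRight (EuclideanSpace.single 1 1)

theorem horizontalProj_apply (v : E3) (i : Fin 3) :
    horizontalProj v i = if (i : ℕ) < 2 then v i else 0 := by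
  fin_cases i <;> simp [horizontalProj]

theorem rho_eq_norm_horizontalProj (y : E3) : rho y = ‖horizontalProj y‖ := by
  simp [rho, EuclideanSpace.norm_eq, Fin.sum_univ_three, horizontalProj_apply]

theorem Fcylinv_eq_radialMap : Fcylinv = radialMap horizontalProj (fun r => 2 * (r - 1)) := by
  ext y i
  simp only [radialMap, ← rho_eq_norm_horizontalProj]
  fin_cases i <;> simp [Fcylinv, horizontalProj_apply]

theorem horizontalProj_etaVec (y : E3) : horizontalProj (etaVec y) = etaVec y := by
  ext i
  fin_cases i <;> simp [horizontalProj_apply, etaVec]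

theorem inner_horizontalProj_etaVec (y : E3) : ⟪horizontalProj y, etaVec y⟫ = 0 := by
  simp [PiLp.inner_apply, Fin.sum_univ_three, horizontalProj_apply, etaVec]
  ring

theorem horizontalProj_zetaVec : horizontalProj zetaVec = 0 := by
  ext i
  fin_cases i <;> simp [horizontalProj_apply, zetaVec]

theorem rho_nonneg (y : E3) : 0 ≤ rho y := Real.sqrt_nonneg _

theorem norm_etaVec {y : E3} (hy : rho y ≠ 0) : ‖etaVec y‖ = 1 := by
  have hrot : ‖(WithLp.toLp 2 (fun i => if i = 0 then -y 1 else if i = 1 then y 0 else 0) : E3)‖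
      = rho y := by
    simp [rho, EuclideanSpace.norm_eq, Fin.sum_univ_three, add_comm]
  rw [etaVec, norm_smul, hrot, norm_inv, Real.norm_eq_abs, abs_of_nonneg (rho_nonneg y)]
  exact inv_mul_cancel₀ hy

theorem norm_zetaVec : ‖zetaVec‖ = 1 := by
  simp [zetaVec]

theorem inner_zetaVec_etaVec (y : E3) : ⟪zetaVec, etaVec y⟫ = 0 := by
  simp [PiLp.inner_apply, zetaVec, etaVec]

theorem rho_cylPt_zero (θ z : ℝ) : rho (cylPt θ z 0) = 1 := by
  simp [rho, cylPt]

theorem Fcylinv_of_rho_eq_one {y : E3} (hy : rho y = 1) :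
    Fcylinv y = WithLp.toLp 2 (fun i => if i = 2 then y 2 else 0) := by
  ext i
  fin_cases i <;> simp [Fcylinv, hy]

theorem continuous_cylPt (θ z : ℝ) : Continuous (cylPt θ z) := by
  refine (PiLp.continuous_toLp 2 _).comp (continuous_pi fun i => ?_)
  split_ifs <;> fun_prop

theorem hasFDerivAt_Fcylinv {y : E3} (hy : rho y ≠ 0) :
    HasFDerivAt Fcylinv (radialMapDeriv horizontalProj (fun r => 2 * (r - 1)) y) y := by
  rw [rho_eq_norm_horizontalProj, norm_ne_zero_iff] at hy
  rw [Fcylinv_eq_radialMap]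
  exact hasFDerivAt_radialMap (by fun_prop) hy

theorem radialMapDeriv_etaVec (y : E3) :
    radialMapDeriv horizontalProj (fun r => 2 * (r - 1)) y (etaVec y) =
      (2 * (rho y - 1) / rho y) • etaVec y := by
  rw [radialMapDeriv_apply_of_inner_eq_zero (horizontalProj_etaVec y)
    (inner_horizontalProj_etaVec y), rho_eq_norm_horizontalProj]

theorem radialMapDeriv_zetaVec (y : E3) :
    radialMapDeriv horizontalProj (fun r => 2 * (r - 1)) y zetaVec = zetaVec :=
  radialMapDeriv_apply_of_proj_eq_zero y horizontalProj_zetaVec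

theorem abs_two_mul_sub_one_div_le {r : ℝ} (hr : 1 ≤ r) : |2 * (r - 1) / r| ≤ 2 * (r - 1) := by
  rw [abs_of_nonneg (by positivity)]
  exact div_le_self (by linarith) hr

/-- for the cylindrical cloaking map, the differential `J = DF⁻¹` at a point
at distance `t = ρ−1` from the cloaking surface `Σ = {ρ=1}` satisfies
`|η·(Jη)| ≤ Ct`, `ζ·(Jζ) = 1`, `ζ·(Jη) = η·(Jζ) = 0`.  Consequently the pullback
`Ẽ = (F⁻¹)^*E` of a continuous 1-form `E` has angular component `|η·Ẽ| ≤ Ct‖E∘F⁻¹‖`,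
while its vertical component converges, as `t → 0⁺`, to the vertical component `ζ·E`
of `E` on the axis `γ`. -/
theorem cylindrical_jacobian_components :
    (∃ C > 0, ∀ y : E3, 1 < rho y → rho y < 2 →
      ∃ J : E3 →L[ℝ] E3, HasFDerivAt Fcylinv J y ∧
        |⟪etaVec y, J (etaVec y)⟫| ≤ C * (rho y - 1) ∧
        ⟪zetaVec, J zetaVec⟫ = 1 ∧
        ⟪zetaVec, J (etaVec y)⟫ = 0 ∧
        ⟪etaVec y, J zetaVec⟫ = 0 ∧
        (∀ Efield : E3 → E3,
          |⟪Efield (Fcylinv y), J (etaVec y)⟫| ≤ C * (rho y - 1) * ‖Efield (Fcylinv y)‖)) ∧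
    (∀ Efield : E3 → E3, Continuous Efield → ∀ θ z : ℝ,
      Tendsto (fun t : ℝ => ⟪Efield (Fcylinv (cylPt θ z t)), zetaVec⟫)
        (nhdsWithin 0 (Set.Ioi 0))
        (nhds ⟪Efield (WithLp.toLp 2 (fun i => if i = 2 then z else 0)), zetaVec⟫)) := by
  set J := radialMapDeriv horizontalProj (fun r : ℝ => 2 * (r - 1))
  refine ⟨⟨2, two_pos, fun y hy _ => ?_⟩, fun E hE θ z => ?_⟩
  · have hρ : rho y ≠ 0 := by linarith
    have hbound := abs_two_mul_sub_one_div_le hy.le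
    have hJη : ‖J y (etaVec y)‖ ≤ 2 * (rho y - 1) := by
      rwa [radialMapDeriv_etaVec, norm_smul, norm_etaVec hρ, mul_one]
    refine ⟨J y, hasFDerivAt_Fcylinv hρ, ?_, ?_, ?_, ?_, fun E => ?_⟩
    · rwa [radialMapDeriv_etaVec, real_inner_smul_right, real_inner_self_eq_norm_sq,
        norm_etaVec hρ, one_pow, mul_one]
    · rw [radialMapDeriv_zetaVec, real_inner_self_eq_norm_sq, norm_zetaVec, one_pow]
    · rw [radialMapDeriv_etaVec, real_inner_smul_right, inner_zetaVec_etaVec, mul_zero]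
    · rw [radialMapDeriv_zetaVec, real_inner_comm, inner_zetaVec_etaVec]
    · calc |⟪E (Fcylinv y), J y (etaVec y)⟫|
          ≤ ‖E (Fcylinv y)‖ * ‖J y (etaVec y)‖ := abs_real_inner_le_norm _ _
        _ ≤ 2 * (rho y - 1) * ‖E (Fcylinv y)‖ := by
          rw [mul_comm]; gcongr
  · have hF : ContinuousAt Fcylinv (cylPt θ z 0) :=
      (hasFDerivAt_Fcylinv (by rw [rho_cylPt_zero]; exact one_ne_zero)).continuousAt
    have hlim := hF.tendsto.comp ((continuous_cylPt θ z).tendsto 0)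
    rw [Fcylinv_of_rho_eq_one (rho_cylPt_zero θ z)] at hlim
    exact ((hE.tendsto _).comp (hlim.mono_left nhdsWithin_le_nhds)).inner tendsto_const_nhds
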